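/- arXiv:1007.5017 — 3 statements merged into one kernel-verified Lean document; each statement's English description precedes it below -/
import Mathlib

section
/- A sequence of positive reals that is ratio monotone is unimodal: there exists r such that a_0 ≤ a_1 ≤ ... ≤ a_r and a_r ≥ a_{r+1} ≥ ... ≥ a_m. -/
def RatioMonotone (a : ℕ → ℝ) (m : ℕ) : Prop :=
  (∀ i : ℕ, i + 1 ≤ (m - 1) / 2 → a (m - i) / a i ≤ a (m - (i + 1)) / a (i + 1)) ∧
  a (m - (m - 1) / 2) / a ((m - 1) / 2) ≤ 1 ∧
  (∀ i : ℕ, 1 ≤ i → i + 1 ≤ m / 2 → a (i - 1) / a (m - i) ≤ a i / a (m - (i + 1))) ∧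
  (1 ≤ m / 2 → a (m / 2 - 1) / a (m - m / 2) ≤ 1)

/-!
Each of the two ratio chains is nondecreasing and ends at a value `≤ 1`, so every ratio in it
is `≤ 1`. This gives the interleaved chain `a 0 ≤ a m ≤ a 1 ≤ a (m - 1) ≤ a 2 ≤ ⋯`, which meets
itself at the middle index `m / 2`: the sequence increases up to `m / 2` and decreases after it.
-/

lemma le_of_le_add_one_of_le {f : ℕ → ℝ} {lo hi : ℕ}
    (hf : ∀ j, lo ≤ j → j + 1 ≤ hi → f j ≤ f (j + 1)) {c : ℝ} (hc : f hi ≤ c)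
    {j : ℕ} (hlo : lo ≤ j) (hj : j ≤ hi) : f j ≤ c := by
  have hmono : MonotoneOn f (Set.Icc lo hi) :=
    monotoneOn_of_le_add_one Set.ordConnected_Icc fun j _ hj hj' => hf j hj.1 hj'.2
  exact (hmono ⟨hlo, hj⟩ ⟨hlo.trans hj, le_rfl⟩ hj).trans hc

namespace RatioMonotone

variable {a : ℕ → ℝ} {m : ℕ}

lemma apply_sub_le (hpos : ∀ k ≤ m, 0 < a k) (hrm : RatioMonotone a m) {i : ℕ}
    (hi : 2 * i ≤ m) : a (m - i) ≤ a i := by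
  by_cases hhalf : i ≤ (m - 1) / 2
  · have hratio : a (m - i) / a i ≤ 1 :=
      le_of_le_add_one_of_le (f := fun j => a (m - j) / a j) (lo := 0)
        (fun j _ hj => hrm.1 j hj) hrm.2.1 (Nat.zero_le i) hhalf
    exact (div_le_one (hpos i (by omega))).mp hratio
  · rw [show m - i = i by omega]

lemma apply_le_sub (hpos : ∀ k ≤ m, 0 < a k) (hrm : RatioMonotone a m) {i : ℕ}
    (hi : 2 * i + 1 ≤ m) : a i ≤ a (m - (i + 1)) := by
  by_cases hhalf : i + 1 ≤ m / 2
  · have hratio : a (i + 1 - 1) / a (m - (i + 1)) ≤ 1 :=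
      le_of_le_add_one_of_le (f := fun j => a (j - 1) / a (m - j)) (lo := 1)
        (fun j hj1 hj => hrm.2.2.1 j hj1 hj) (hrm.2.2.2 (by omega)) (by omega) hhalf
    rw [Nat.add_sub_cancel] at hratio
    exact (div_le_one (hpos _ (by omega))).mp hratio
  · rw [show m - (i + 1) = i by omega]

lemma apply_le_apply_add_one (hpos : ∀ k ≤ m, 0 < a k) (hrm : RatioMonotone a m) {i : ℕ}
    (hi : i < m / 2) : a i ≤ a (i + 1) :=
  (hrm.apply_le_sub hpos (by omega)).trans (hrm.apply_sub_le hpos (by omega))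

lemma apply_add_one_le_apply (hpos : ∀ k ≤ m, 0 < a k) (hrm : RatioMonotone a m) {i : ℕ}
    (hhalf : m / 2 ≤ i) (hi : i < m) : a (i + 1) ≤ a i := by
  have hdown := hrm.apply_sub_le hpos (i := m - 1 - i) (by omega)
  have hup := hrm.apply_le_sub hpos (i := m - 1 - i) (by omega)
  rw [show m - (m - 1 - i) = i + 1 by omega] at hdown
  rw [show m - (m - 1 - i + 1) = i by omega] at hup
  exact hdown.trans hup

end RatioMonotone

theorem stmt_5 (m : ℕ) (a : ℕ → ℝ)
    (hpos : ∀ k ≤ m, 0 < a k)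
    (hrm : RatioMonotone a m) :
    ∃ r ≤ m, (∀ i : ℕ, i < r → a i ≤ a (i + 1)) ∧
      (∀ i : ℕ, r ≤ i → i < m → a (i + 1) ≤ a i) :=
  ⟨m / 2, Nat.div_le_self m 2, fun _ hi => hrm.apply_le_apply_add_one hpos hi,
    fun _ hhalf hi => hrm.apply_add_one_le_apply hpos hhalf hi⟩
end

section
/- If P(x) = ∑_{k=0}^m a_k x^k with 0 < a_0 ≤ a_1 ≤ ... ≤ a_m, then for any real c ≥ 1 the coefficient sequence of P(x+c) is log-concave and all coefficients of P(x+c) are positive. -/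
/-!
Scaling by powers of `c` turns the claim into one about `B k = ∑ j, C(j, k) A j` with
`A j = c ^ j a j`, which is nonnegative and nondecreasing because `c ≥ 1`. Writing `A` as partial
sums of nonnegative increments `d t` gives `B k = ∑ t, d t T_t k`, where `T_t k = ∑_{t ≤ r ≤ m} C(r, k)`.
Every `T_t` satisfies `T_t (k + 2) / T_t (k + 1) ≤ (m - k) / (k + 2) ≤ T_t (k + 1) / T_t k`, with
bounds independent of `t`, so `T_s k T_t (k + 2) ≤ T_s (k + 1) T_t (k + 1)` for all `s, t`, and
expanding `B k B (k + 2)` and `B (k + 1) ^ 2` as double sums compares them term by term.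
-/

open Finset

def tailChooseSum (t n k : ℕ) : ℕ := ∑ r ∈ Ico t n, r.choose k

lemma choose_succ_add_tailChooseSum {t n : ℕ} (h : t ≤ n) (k : ℕ) :
    t.choose (k + 1) + tailChooseSum t n k = n.choose (k + 1) := by
  induction n, h using Nat.le_induction with
  | base => simp [tailChooseSum]
  | succ n h ih =>
    rw [tailChooseSum, sum_Ico_succ_top h, ← add_assoc, ← tailChooseSum, ih,
      Nat.choose_succ_succ', add_comm]

lemma tailChooseSum_of_le {t n : ℕ} (h : n ≤ t) (k : ℕ) : tailChooseSum t n k = 0 := by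
  simp [tailChooseSum, Ico_eq_empty_of_le h]

lemma succ_mul_tailChooseSum_succ_le (t n k : ℕ) :
    (k + 1) * tailChooseSum t n (k + 1) ≤ (n - (k + 1)) * tailChooseSum t n k := by
  simp only [tailChooseSum, mul_sum]
  refine sum_le_sum fun r hr => ?_
  rw [mul_comm, Nat.choose_succ_right_eq, mul_comm]
  exact Nat.mul_le_mul_right _ (by have := (mem_Ico.mp hr).2; omega)

/-- By the hockey stick identity `tailChooseSum t n k = n.choose (k + 1) - t.choose (k + 1)`;
the bound is an equality for the `n.choose` part and goes the right way for the `t.choose` part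
since `t ≤ n`. -/
lemma sub_mul_tailChooseSum_le (t n k : ℕ) :
    (n - (k + 1)) * tailChooseSum t n k ≤ (k + 2) * tailChooseSum t n (k + 1) := by
  rcases le_or_gt t n with h | h
  · have ht := choose_succ_add_tailChooseSum h k
    have ht' := choose_succ_add_tailChooseSum h (k + 1)
    have hn := Nat.choose_succ_right_eq n (k + 1)
    have htk : t.choose (k + 2) * (k + 2) ≤ t.choose (k + 1) * (n - (k + 1)) := by
      rw [Nat.choose_succ_right_eq]
      exact Nat.mul_le_mul_left _ (by omega)
    apply Nat.le_of_add_le_add_right (b := (n - (k + 1)) * t.choose (k + 1))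
    calc (n - (k + 1)) * tailChooseSum t n k + (n - (k + 1)) * t.choose (k + 1)
        = (k + 2) * tailChooseSum t n (k + 1) + t.choose (k + 2) * (k + 2) := by
          rw [← mul_add, add_comm _ (t.choose _), ht, mul_comm, ← hn, ← ht']
          ring
      _ ≤ _ := by rw [mul_comm _ (t.choose _)]; gcongr
  · simp [tailChooseSum_of_le h.le]

lemma tailChooseSum_mul_le_mul (s t n k : ℕ) :
    tailChooseSum s n k * tailChooseSum t n (k + 2)
      ≤ tailChooseSum s n (k + 1) * tailChooseSum t n (k + 1) := by
  have hs := sub_mul_tailChooseSum_le s n k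
  have ht := succ_mul_tailChooseSum_succ_le t n (k + 1)
  rcases Nat.eq_zero_or_pos (n - (k + 1)) with hn | hn
  · have : tailChooseSum t n (k + 2) = 0 := by
      have : n - (k + 1 + 1) = 0 := by omega
      simpa [this] using ht
    simp [this]
  · have ht' : (k + 2) * tailChooseSum t n (k + 2) ≤ (n - (k + 1)) * tailChooseSum t n (k + 1) :=
      ht.trans (by gcongr; omega)
    refine Nat.le_of_mul_le_mul_left ?_ (Nat.mul_pos hn (by omega : 0 < k + 2))
    calc (n - (k + 1)) * (k + 2) * (tailChooseSum s n k * tailChooseSum t n (k + 2))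
        = ((n - (k + 1)) * tailChooseSum s n k) * ((k + 2) * tailChooseSum t n (k + 2)) := by ring
      _ ≤ ((k + 2) * tailChooseSum s n (k + 1)) * ((n - (k + 1)) * tailChooseSum t n (k + 1)) := by
          gcongr
      _ = _ := by ring

theorem sum_mul_sum_le_sq_of_mul_le_mul {ι R : Type*} [CommSemiring R] [PartialOrder R]
    [IsOrderedRing R] (s : Finset ι) {d f g h : ι → R} (hd : ∀ i ∈ s, 0 ≤ d i)
    (hfgh : ∀ i ∈ s, ∀ j ∈ s, f i * h j ≤ g i * g j) :
    (∑ i ∈ s, d i * f i) * (∑ i ∈ s, d i * h i) ≤ (∑ i ∈ s, d i * g i) ^ 2 := by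
  rw [sq, sum_mul_sum, sum_mul_sum]
  refine sum_le_sum fun i hi => sum_le_sum fun j hj => ?_
  calc d i * f i * (d j * h j) = (d i * d j) * (f i * h j) := by ring
    _ ≤ (d i * d j) * (g i * g j) :=
        mul_le_mul_of_nonneg_left (hfgh i hi j hj) (mul_nonneg (hd i hi) (hd j hj))
    _ = d i * g i * (d j * g j) := by ring

def binomialTransform (m : ℕ) (A : ℕ → ℝ) (k : ℕ) : ℝ := ∑ j ∈ Icc k m, (j.choose k : ℝ) * A j

lemma binomialTransform_eq_sum_mul_tailChooseSum {m : ℕ} {A d : ℕ → ℝ}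
    (hA : ∀ i ≤ m, A i = ∑ t ∈ range (i + 1), d t) (k : ℕ) :
    binomialTransform m A k = ∑ t ∈ range (m + 1), d t * tailChooseSum t (m + 1) k := by
  have hIcc : binomialTransform m A k = ∑ r ∈ range (m + 1), (r.choose k : ℝ) * A r := by
    refine sum_subset (fun r hr => by simp only [mem_Icc, mem_range] at hr ⊢; omega)
      fun r hr hr' => ?_
    simp only [mem_range, mem_Icc, not_and, not_le] at hr hr'
    simp [Nat.choose_eq_zero_of_lt (show r < k by omega)]
  rw [hIcc, range_eq_Ico]
  simp only [tailChooseSum, Nat.cast_sum, mul_sum]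
  rw [sum_Ico_Ico_comm]
  refine sum_congr rfl fun r hr => ?_
  rw [hA r (by simp only [mem_Ico] at hr; omega), mul_sum, ← range_eq_Ico]
  exact sum_congr rfl fun t _ => by ring

lemma exists_nonneg_partialSums_eq {m : ℕ} {A : ℕ → ℝ} (h0 : 0 ≤ A 0)
    (hmono : ∀ k, k + 1 ≤ m → A k ≤ A (k + 1)) :
    ∃ d : ℕ → ℝ, (∀ t ≤ m, 0 ≤ d t) ∧ ∀ i, A i = ∑ t ∈ range (i + 1), d t := by
  refine ⟨fun | 0 => A 0 | t + 1 => A (t + 1) - A t, fun t ht => ?_, fun i => ?_⟩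
  · cases t with
    | zero => exact h0
    | succ t => exact sub_nonneg.mpr (hmono t ht)
  · induction i with
    | zero => simp
    | succ i ih => rw [sum_range_succ, ← ih]; ring

lemma binomialTransform_mul_le_sq {m : ℕ} {A : ℕ → ℝ} (h0 : 0 ≤ A 0)
    (hmono : ∀ k, k + 1 ≤ m → A k ≤ A (k + 1)) (k : ℕ) :
    binomialTransform m A k * binomialTransform m A (k + 2)
      ≤ binomialTransform m A (k + 1) ^ 2 := by
  obtain ⟨d, hd, hA⟩ := exists_nonneg_partialSums_eq h0 hmono
  simp only [binomialTransform_eq_sum_mul_tailChooseSum fun i _ => hA i]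
  refine sum_mul_sum_le_sq_of_mul_le_mul _ (fun t ht => hd t (Nat.lt_succ_iff.mp (mem_range.mp ht)))
    fun s _ t _ => ?_
  exact_mod_cast tailChooseSum_mul_le_mul s t (m + 1) k

lemma binomialTransform_pow_mul (m : ℕ) (a : ℕ → ℝ) (c : ℝ) (k : ℕ) :
    binomialTransform m (fun j => c ^ j * a j) k
      = c ^ k * ∑ j ∈ Icc k m, (j.choose k : ℝ) * c ^ (j - k) * a j := by
  rw [binomialTransform, mul_sum]
  refine sum_congr rfl fun j hj => ?_
  rw [← pow_sub_mul_pow c (mem_Icc.mp hj).1]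
  ring

lemma pow_mul_le_pow_succ_mul {c x y : ℝ} (hc : 1 ≤ c) (hx : 0 ≤ x) (hxy : x ≤ y) (j : ℕ) :
    c ^ j * x ≤ c ^ (j + 1) * y :=
  mul_le_mul (pow_le_pow_right₀ hc j.le_succ) hxy hx (by positivity)

open Finset in
theorem stmt_10 (m : ℕ) (a b : ℕ → ℝ) (c : ℝ) (hc : 1 ≤ c)
    (hpos : 0 < a 0)
    (hmono : ∀ k, k + 1 ≤ m → a k ≤ a (k + 1))
    (hb : ∀ k ≤ m, b k = ∑ j ∈ Icc k m, (j.choose k : ℝ) * c ^ (j - k) * a j) :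
    (∀ k ≤ m, 0 < b k) ∧
    (∀ k : ℕ, 1 ≤ k → k + 1 ≤ m → b (k - 1) * b (k + 1) ≤ b k ^ 2) := by
  have hc0 : 0 < c := by linarith
  have ha : ∀ j ≤ m, 0 < a j := by
    intro j
    induction j with
    | zero => exact fun _ => hpos
    | succ j ih => exact fun h => (ih (by omega)).trans_le (hmono j h)
  refine ⟨fun k hk => ?_, fun k hk hkm => ?_⟩
  · rw [hb k hk]
    refine sum_pos (fun j hj => ?_) ⟨k, by simp [hk]⟩
    have hj := mem_Icc.mp hj
    have := Nat.choose_pos hj.1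
    have := ha j hj.2
    positivity
  · obtain ⟨k, rfl⟩ : ∃ j, k = j + 1 := ⟨k - 1, by omega⟩
    have key := binomialTransform_mul_le_sq (A := fun j => c ^ j * a j) (by simpa using hpos.le)
      (fun j hj => pow_mul_le_pow_succ_mul hc (ha j (by omega)).le (hmono j hj) j) k
    simp only [binomialTransform_pow_mul, ← hb _ (by omega : k ≤ m), ← hb _ (by omega : k + 1 ≤ m),
      ← hb _ (by omega : k + 2 ≤ m)] at key
    rw [Nat.add_sub_cancel]
    refine le_of_mul_le_mul_left ?_ (by positivity : 0 < c ^ k * c ^ (k + 2))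
    calc c ^ k * c ^ (k + 2) * (b k * b (k + 1 + 1))
        = c ^ k * b k * (c ^ (k + 2) * b (k + 2)) := by ring
      _ ≤ (c ^ (k + 1) * b (k + 1)) ^ 2 := key
      _ = c ^ k * c ^ (k + 2) * b (k + 1) ^ 2 := by ring
end

section
/- The coefficient sequence of the Boros–Moll polynomial P_m(x) = ∑_{k=0}^m c_k(m)(x+1)^k, where c_k(m) = 2^{-2m+k}·C(2m-2k,m-k)·C(m+k,k), is ratio monotone for m ≥ 2. -/
noncomputable def bmCoeff (m k : ℕ) : ℝ :=
  (2 : ℝ) ^ k / (2 : ℝ) ^ (2 * m) * ((2 * m - 2 * k).choose (m - k) : ℝ) *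
    ((m + k).choose k : ℝ)

open Finset

lemma bmCoeff_pos (m k : ℕ) : 0 < bmCoeff m k := by
  have h₁ : 0 < ((2 * m - 2 * k).choose (m - k) : ℝ) := mod_cast Nat.choose_pos (by omega)
  have h₂ : 0 < ((m + k).choose k : ℝ) := mod_cast Nat.choose_pos (by omega)
  unfold bmCoeff
  positivity

lemma bmCoeff_eq_of_add_eq {m k a : ℕ} (h : k + a = m) :
    bmCoeff m k = 2 ^ k / 2 ^ (2 * m) * a.centralBinom * (a + 2 * k).choose k := by
  subst h
  rw [bmCoeff, Nat.centralBinom_eq_two_mul_choose, show 2 * (k + a) - 2 * k = 2 * a by omega,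
    show k + a - k = a by omega, show k + a + k = a + 2 * k by omega]

lemma cast_succ_mul_centralBinom_succ (a : ℕ) :
    ((a : ℝ) + 1) * (a + 1).centralBinom = 2 * (2 * a + 1) * a.centralBinom :=
  mod_cast Nat.succ_mul_centralBinom_succ a

lemma bmCoeff_succ_zero (m : ℕ) :
    2 * ((m : ℝ) + 1) * bmCoeff (m + 1) 0 = (2 * m + 1) * bmCoeff m 0 := by
  rw [bmCoeff_eq_of_add_eq (a := m + 1) (by omega), bmCoeff_eq_of_add_eq (a := m) (by omega)]
  simp only [pow_zero, mul_zero, add_zero, Nat.choose_zero_right, Nat.cast_one, mul_one, mul_add,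
    pow_add]
  field_simp
  linear_combination cast_succ_mul_centralBinom_succ m

lemma bmCoeff_succ_self (m : ℕ) :
    2 * ((m : ℝ) + 1) * bmCoeff (m + 1) (m + 1) = (4 * m + 2) * bmCoeff m m := by
  rw [bmCoeff_eq_of_add_eq (a := 0) (by omega), bmCoeff_eq_of_add_eq (a := 0) (by omega)]
  simp only [Nat.centralBinom_zero, zero_add, Nat.cast_one, mul_one, mul_add, pow_add]
  rw [← Nat.centralBinom_eq_two_mul_choose, show 2 * m + 2 * 1 = 2 * (m + 1) by ring,
    ← Nat.centralBinom_eq_two_mul_choose]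
  field_simp
  linear_combination cast_succ_mul_centralBinom_succ m

lemma bmCoeff_succ_succ {m k : ℕ} (hk : k < m) :
    2 * ((m : ℝ) + 1) * bmCoeff (m + 1) (k + 1) =
      (2 * m + 2 * k + 2) * bmCoeff m k + (2 * m - 2 * k - 1) * bmCoeff m (k + 1) := by
  obtain ⟨a, rfl⟩ : ∃ a, m = k + a + 1 := ⟨m - k - 1, by omega⟩
  rw [bmCoeff_eq_of_add_eq (a := a + 1) (by omega), bmCoeff_eq_of_add_eq (a := a + 1) (by omega),
    bmCoeff_eq_of_add_eq (a := a) (by omega)]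
  obtain ⟨n, hn⟩ : ∃ n, n = a + 2 * k + 1 := ⟨_, rfl⟩
  rw [show a + 1 + 2 * (k + 1) = n + 2 by omega, show a + 1 + 2 * k = n by omega,
    show a + 2 * (k + 1) = n + 1 by omega]
  have h₁ : ((n : ℝ) + 1) * n.choose k = (n + 1).choose (k + 1) * (k + 1) :=
    mod_cast Nat.add_one_mul_choose_eq n k
  have h₂ : ((n + 1).choose (k + 1) : ℝ) * (n + 2) = (n + 2).choose (k + 1) * (a + k + 2) := by
    have := Nat.choose_mul_succ_eq (n + 1) (k + 1)
    rw [show n + 1 + 1 - (k + 1) = a + k + 2 by omega] at this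
    exact_mod_cast this
  subst hn
  simp only [mul_add, pow_add]
  field_simp
  push_cast at h₁ h₂ ⊢
  linear_combination (-2 * ((a + 1).centralBinom : ℝ)) * h₂ - 4 * ((a + 1).centralBinom : ℝ) * h₁ +
    2 * ((a + 2 * k + 1 + 1).choose (k + 1) : ℝ) * cast_succ_mul_centralBinom_succ a

lemma sum_mul_bmCoeff_succ (w : ℕ → ℝ) (m : ℕ) :
    2 * ((m : ℝ) + 1) * ∑ j ∈ range (m + 2), w j * bmCoeff (m + 1) j =
      ∑ k ∈ range (m + 1),
        ((2 * m + 2 * k + 2) * w (k + 1) + (2 * m - 2 * k + 1) * w k) * bmCoeff m k := by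
  have hmid : ∑ k ∈ range m, 2 * ((m : ℝ) + 1) * (w (k + 1) * bmCoeff (m + 1) (k + 1)) =
      ∑ k ∈ range m, (2 * m + 2 * k + 2) * w (k + 1) * bmCoeff m k +
        ∑ k ∈ range m, (2 * m - 2 * (k + 1 : ℕ) + 1) * w (k + 1) * bmCoeff m (k + 1) := by
    rw [← sum_add_distrib]
    refine sum_congr rfl fun k hk => ?_
    rw [mul_left_comm, bmCoeff_succ_succ (mem_range.1 hk)]
    push_cast
    ring
  have hsplit : ∑ k ∈ range (m + 1),
        ((2 * m + 2 * k + 2) * w (k + 1) + (2 * m - 2 * k + 1) * w k) * bmCoeff m k =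
      ∑ k ∈ range (m + 1), (2 * m + 2 * k + 2) * w (k + 1) * bmCoeff m k +
        ∑ k ∈ range (m + 1), (2 * m - 2 * k + 1) * w k * bmCoeff m k := by
    rw [← sum_add_distrib]
    exact sum_congr rfl fun k _ => add_mul _ _ _
  rw [hsplit, sum_range_succ (fun k => (2 * m + 2 * k + 2) * w (k + 1) * bmCoeff m k),
    sum_range_succ' (fun k => (2 * m - 2 * k + 1) * w k * bmCoeff m k), sum_range_succ',
    sum_range_succ, mul_add, mul_add, mul_sum, hmid]
  push_cast
  linear_combination w (m + 1) * bmCoeff_succ_self m + w 0 * bmCoeff_succ_zero m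

/-- The coefficient `d_i` of `x ^ i` in `P_m(x)`. Since `bmCoeff m j` does not vanish for `j > m`
(truncated subtraction) the upper bound of the range matters; the terms with `j < i` vanish. -/
noncomputable def bmPolyCoeff (m i : ℕ) : ℝ :=
  ∑ j ∈ range (m + 1), (j.choose i : ℝ) * bmCoeff m j

lemma cast_choose_succ_mul (n k : ℕ) :
    (n.choose (k + 1) : ℝ) * (k + 1) = n.choose k * (n - k) := by
  rcases le_or_gt k n with h | h
  · rw [← Nat.cast_sub h]
    exact_mod_cast Nat.choose_succ_right_eq n k
  · rw [Nat.choose_eq_zero_of_lt h, Nat.choose_eq_zero_of_lt (by omega)]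
    simp

lemma bmPolyCoeff_succ_zero (m : ℕ) :
    2 * ((m : ℝ) + 1) * bmPolyCoeff (m + 1) 0 = (4 * m + 3) * bmPolyCoeff m 0 := by
  rw [bmPolyCoeff, bmPolyCoeff, sum_mul_bmCoeff_succ, mul_sum]
  refine sum_congr rfl fun k _ => ?_
  simp only [Nat.choose_zero_right, Nat.cast_one]
  ring

lemma bmPolyCoeff_succ_succ (m i : ℕ) :
    2 * ((m : ℝ) + 1) * bmPolyCoeff (m + 1) (i + 1) =
      (2 * m + 2 * i + 2) * bmPolyCoeff m i + (4 * m + 2 * i + 5) * bmPolyCoeff m (i + 1) := by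
  rw [bmPolyCoeff, bmPolyCoeff, bmPolyCoeff, sum_mul_bmCoeff_succ, mul_sum, mul_sum,
    ← sum_add_distrib]
  refine sum_congr rfl fun k _ => ?_
  rw [Nat.choose_succ_succ', Nat.cast_add]
  linear_combination -2 * bmCoeff m k * cast_choose_succ_mul k i

lemma bmPolyCoeff_nonneg (m i : ℕ) : 0 ≤ bmPolyCoeff m i :=
  sum_nonneg fun j _ => mul_nonneg (Nat.cast_nonneg _) (bmCoeff_pos m j).le

lemma bmPolyCoeff_pos {m i : ℕ} (h : i ≤ m) : 0 < bmPolyCoeff m i :=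
  sum_pos' (fun j _ => mul_nonneg (Nat.cast_nonneg _) (bmCoeff_pos m j).le)
    ⟨m, self_mem_range_succ m, mul_pos (mod_cast Nat.choose_pos h) (bmCoeff_pos m m)⟩

lemma bmPolyCoeff_eq_zero {m i : ℕ} (h : m < i) : bmPolyCoeff m i = 0 :=
  sum_eq_zero fun j hj => by
    rw [Nat.choose_eq_zero_of_lt (by rw [mem_range] at hj; omega), Nat.cast_zero, zero_mul]

lemma bmPolyCoeff_eq_sum_Icc (m i : ℕ) :
    bmPolyCoeff m i = ∑ j ∈ Icc i m, (j.choose i : ℝ) * bmCoeff m j := by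
  refine (sum_subset (fun j hj => ?_) fun j _ hj => ?_).symm
  · rw [mem_Icc] at hj; rw [mem_range]; omega
  · rw [mem_range] at *
    rw [mem_Icc] at hj
    rw [Nat.choose_eq_zero_of_lt (by omega), Nat.cast_zero, zero_mul]

-- Both ratio bounds hold for every `i` (for `i ≥ m` both sides vanish or have the right sign),
-- which keeps the induction free of side conditions.
lemma succ_mul_bmPolyCoeff_succ_le (m i : ℕ) :
    ((i : ℝ) + 1) * bmPolyCoeff m (i + 1) ≤ ((m : ℝ) - i) * bmPolyCoeff m i := by
  induction m generalizing i with
  | zero =>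
    rw [bmPolyCoeff_eq_zero (i := i + 1) i.succ_pos, mul_zero]
    rcases i with _ | i
    · simp
    · rw [bmPolyCoeff_eq_zero (by omega), mul_zero]
  | succ m ih =>
    refine le_of_mul_le_mul_left ?_ (by positivity : (0 : ℝ) < 2 * (m + 1))
    rcases i with _ | i
    · have := ih 0
      simp only [Nat.cast_zero, zero_add, Nat.cast_add, Nat.cast_one, sub_zero] at this ⊢
      linear_combination bmPolyCoeff_succ_succ m 0 - (m + 1) * bmPolyCoeff_succ_zero m +
        (4 * m + 5) * this + bmPolyCoeff_nonneg m 0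
    · have h₁ := ih i
      have h₂ := ih (i + 1)
      have e₁ := bmPolyCoeff_succ_succ m i
      have e₂ := bmPolyCoeff_succ_succ m (i + 1)
      push_cast at h₂ e₂ ⊢
      linear_combination (i + 2) * e₂ - (m - i) * e₁ + (2 * m + 2 * i + 2) * h₁ +
        (4 * m + 2 * i + 7) * h₂ + bmPolyCoeff_nonneg m (i + 1)

lemma two_mul_sub_mul_bmPolyCoeff_le (m i : ℕ) :
    2 * ((m : ℝ) - i) * bmPolyCoeff m i ≤ (2 * i + 3) * bmPolyCoeff m (i + 1) := by
  induction m generalizing i with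
  | zero =>
    rw [bmPolyCoeff_eq_zero (i := i + 1) i.succ_pos, mul_zero]
    rcases i with _ | i
    · simp
    · rw [bmPolyCoeff_eq_zero (by omega), mul_zero]
  | succ m ih =>
    refine le_of_mul_le_mul_left ?_ (by positivity : (0 : ℝ) < 2 * (m + 1))
    rcases i with _ | i
    · have := ih 0
      simp only [Nat.cast_zero, zero_add, Nat.cast_add, Nat.cast_one, sub_zero] at this ⊢
      linear_combination 2 * (m + 1) * bmPolyCoeff_succ_zero m - 3 * bmPolyCoeff_succ_succ m 0 +
        (4 * m + 4) * this + 3 * bmPolyCoeff_nonneg m 1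
    · have h₁ := ih i
      have h₂ := ih (i + 1)
      have e₁ := bmPolyCoeff_succ_succ m i
      have e₂ := bmPolyCoeff_succ_succ m (i + 1)
      push_cast at h₂ e₂ ⊢
      linear_combination 2 * (m - i) * e₁ - (2 * i + 5) * e₂ + (2 * m + 2 * i + 2) * h₁ +
        (4 * m + 2 * i + 7) * h₂

lemma mul_le_mul_of_weighted_le {p q r s x y u v : ℝ} (hp : 0 < p) (hr : 0 < r) (hx : 0 ≤ x)
    (hy : 0 ≤ y) (huv : 0 ≤ u * v) (hqs : q * s ≤ p * r) (h₁ : p * x ≤ q * u)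
    (h₂ : r * y ≤ s * v) : x * y ≤ u * v := by
  refine le_of_mul_le_mul_left ?_ (mul_pos hp hr)
  calc p * r * (x * y) = (p * x) * (r * y) := by ring
    _ ≤ (q * u) * (s * v) :=
      mul_le_mul h₁ h₂ (by positivity) ((by positivity : 0 ≤ p * x).trans h₁)
    _ = q * s * (u * v) := by ring
    _ ≤ p * r * (u * v) := mul_le_mul_of_nonneg_right hqs huv

lemma bmPolyCoeff_mul_le_of_add_eq {m i j : ℕ} (h : i + j + 1 = m) :
    bmPolyCoeff m (j + 1) * bmPolyCoeff m (i + 1) ≤ bmPolyCoeff m j * bmPolyCoeff m i := by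
  have hm : (m : ℝ) = i + j + 1 := by rw [← h]; push_cast; ring
  have h₁ := succ_mul_bmPolyCoeff_succ_le m i
  have h₂ := succ_mul_bmPolyCoeff_succ_le m j
  rw [hm, show (i : ℝ) + j + 1 - i = j + 1 by ring] at h₁
  rw [hm, show (i : ℝ) + j + 1 - j = i + 1 by ring] at h₂
  exact mul_le_mul_of_weighted_le (by positivity) (by positivity) (bmPolyCoeff_nonneg _ _)
    (bmPolyCoeff_nonneg _ _) (mul_nonneg (bmPolyCoeff_nonneg _ _) (bmPolyCoeff_nonneg _ _))
    (by rw [mul_comm]) h₂ h₁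

lemma bmPolyCoeff_mul_le_of_add_eq_two {m i j : ℕ} (h : i + j + 2 = m) :
    bmPolyCoeff m i * bmPolyCoeff m j ≤ bmPolyCoeff m (i + 1) * bmPolyCoeff m (j + 1) := by
  have hm : (m : ℝ) = i + j + 2 := by rw [← h]; push_cast; ring
  have h₁ := two_mul_sub_mul_bmPolyCoeff_le m i
  have h₂ := two_mul_sub_mul_bmPolyCoeff_le m j
  rw [hm, show (i : ℝ) + j + 2 - i = j + 2 by ring] at h₁
  rw [hm, show (i : ℝ) + j + 2 - j = i + 2 by ring] at h₂
  exact mul_le_mul_of_weighted_le (by positivity) (by positivity) (bmPolyCoeff_nonneg _ _)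
    (bmPolyCoeff_nonneg _ _) (mul_nonneg (bmPolyCoeff_nonneg _ _) (bmPolyCoeff_nonneg _ _))
    (by nlinarith) h₁ h₂

lemma bmPolyCoeff_sub_le (m : ℕ) :
    bmPolyCoeff m (m - (m - 1) / 2) ≤ bmPolyCoeff m ((m - 1) / 2) := by
  obtain ⟨s, rfl | rfl⟩ := Nat.even_or_odd' m
  · rcases s with _ | s
    · rfl
    rw [show (2 * (s + 1) - 1) / 2 = s by omega, show 2 * (s + 1) - s = s + 2 by omega]
    have h₁ := succ_mul_bmPolyCoeff_succ_le (2 * (s + 1)) s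
    have h₂ := succ_mul_bmPolyCoeff_succ_le (2 * (s + 1)) (s + 1)
    push_cast at h₁ h₂
    refine le_of_mul_le_mul_left ?_ (by positivity : (0 : ℝ) < s + 2)
    linear_combination h₁ + h₂
  · rw [show (2 * s + 1 - 1) / 2 = s by omega, show 2 * s + 1 - s = s + 1 by omega]
    have h₁ := succ_mul_bmPolyCoeff_succ_le (2 * s + 1) s
    push_cast at h₁
    refine le_of_mul_le_mul_left ?_ (by positivity : (0 : ℝ) < s + 1)
    linear_combination h₁

lemma bmPolyCoeff_half_pred_le {m : ℕ} (hm : 1 ≤ m / 2) :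
    bmPolyCoeff m (m / 2 - 1) ≤ bmPolyCoeff m (m - m / 2) := by
  obtain ⟨s, rfl | rfl⟩ := Nat.even_or_odd' m
  · obtain ⟨t, rfl⟩ : ∃ t, s = t + 1 := ⟨s - 1, by omega⟩
    rw [show 2 * (t + 1) / 2 - 1 = t by omega,
      show 2 * (t + 1) - 2 * (t + 1) / 2 = t + 1 by omega]
    have h₁ := two_mul_sub_mul_bmPolyCoeff_le (2 * (t + 1)) t
    push_cast at h₁
    refine le_of_mul_le_mul_left ?_ (by positivity : (0 : ℝ) < 2 * t + 4)
    linear_combination h₁ + bmPolyCoeff_nonneg (2 * (t + 1)) (t + 1)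
  · obtain ⟨t, rfl⟩ : ∃ t, s = t + 1 := ⟨s - 1, by omega⟩
    rw [show (2 * (t + 1) + 1) / 2 - 1 = t by omega,
      show 2 * (t + 1) + 1 - (2 * (t + 1) + 1) / 2 = t + 2 by omega]
    have h₁ := two_mul_sub_mul_bmPolyCoeff_le (2 * (t + 1) + 1) t
    have h₂ := two_mul_sub_mul_bmPolyCoeff_le (2 * (t + 1) + 1) (t + 1)
    push_cast at h₁ h₂
    refine le_of_mul_le_mul_left ?_ (by positivity : (0 : ℝ) < 4 * (t + 2) * (t + 3))
    linear_combination 2 * (t + 2) * h₁ + (2 * t + 3) * h₂ +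
      (4 * t + 9) * bmPolyCoeff_nonneg (2 * (t + 1) + 1) (t + 2)

theorem ratioMonotone_bmPolyCoeff (m : ℕ) : RatioMonotone (bmPolyCoeff m) m := by
  refine ⟨fun i hi => ?_, ?_, fun i hi₁ hi => ?_, fun hm => ?_⟩
  · rw [div_le_div_iff₀ (bmPolyCoeff_pos (by omega)) (bmPolyCoeff_pos (by omega)),
      show m - i = m - (i + 1) + 1 by omega]
    exact bmPolyCoeff_mul_le_of_add_eq (by omega)
  · exact (div_le_one (bmPolyCoeff_pos (by omega))).2 (bmPolyCoeff_sub_le m)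
  · obtain ⟨i, rfl⟩ : ∃ k, i = k + 1 := ⟨i - 1, by omega⟩
    rw [div_le_div_iff₀ (bmPolyCoeff_pos (by omega)) (bmPolyCoeff_pos (by omega)),
      Nat.add_sub_cancel, show m - (i + 1) = m - (i + 1 + 1) + 1 by omega]
    exact bmPolyCoeff_mul_le_of_add_eq_two (by omega)
  · exact (div_le_one (bmPolyCoeff_pos (by omega))).2 (bmPolyCoeff_half_pred_le hm)

lemma RatioMonotone.of_eq {a b : ℕ → ℝ} {m : ℕ} (h : ∀ k ≤ m, a k = b k)
    (hb : RatioMonotone b m) : RatioMonotone a m := by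
  obtain ⟨h₁, h₂, h₃, h₄⟩ := hb
  refine ⟨fun i hi => ?_, ?_, fun i hi₁ hi => ?_, fun hm => ?_⟩ <;>
    simp (disch := omega) only [h]
  exacts [h₁ i hi, h₂, h₃ i hi₁ hi, h₄ hm]

open Finset in
theorem stmt_13_general (m : ℕ) (d : ℕ → ℝ)
    (hd : ∀ k ≤ m, d k = ∑ j ∈ Icc k m, (j.choose k : ℝ) * bmCoeff m j) :
    RatioMonotone d m :=
  (ratioMonotone_bmPolyCoeff m).of_eq fun k hk => (hd k hk).trans (bmPolyCoeff_eq_sum_Icc m k).symm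

open Finset in
theorem stmt_13 (m : ℕ) (hm : 2 ≤ m) (d : ℕ → ℝ)
    (hd : ∀ k ≤ m, d k = ∑ j ∈ Icc k m, (j.choose k : ℝ) * bmCoeff m j) :
    RatioMonotone d m :=
  stmt_13_general m d hd
end
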